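/- For every n ≥ 5, the signed graph Γ_n is unbalanced and contains no negative cycle of length 3 and no negative cycle of length 4; indeed, every negative cycle of Γ_n of minimum length has length 5. -/

import Mathlib

structure SignedGraph (V : Type*) where
  G : SimpleGraph V
  sign : V → V → ℤ
  sign_symm : ∀ u v, sign u v = sign v u
  sign_mem : ∀ u v, G.Adj u v → sign u v = 1 ∨ sign u v = -1
  sign_not : ∀ u v, ¬ G.Adj u v → sign u v = 0

namespace SignedGraph

variable {V : Type*}

/-- The adjacency matrix of a signed graph, over `ℝ`. -/
noncomputable def adjMatrix (Γ : SignedGraph V) : Matrix V V ℝ :=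
  fun u v => (Γ.sign u v : ℝ)

/-- The largest eigenvalue `λ₁` of a signed graph. -/
noncomputable def lambda1 (Γ : SignedGraph V) [Fintype V] : ℝ :=
  letI := Classical.decEq V
  sSup (spectrum ℝ Γ.adjMatrix)

/-- The smallest eigenvalue `λₙ` of a signed graph. -/
noncomputable def lambdaMin (Γ : SignedGraph V) [Fintype V] : ℝ :=
  letI := Classical.decEq V
  sInf (spectrum ℝ Γ.adjMatrix)

/-- The spectral radius `ρ = max {λ₁, -λₙ}` of a signed graph. -/
noncomputable def rho (Γ : SignedGraph V) [Fintype V] : ℝ :=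
  max Γ.lambda1 (-Γ.lambdaMin)

/-- The sign (product of edge signs) of a walk. -/
def walkSign (Γ : SignedGraph V) {G' : SimpleGraph V} : ∀ {u v : V}, G'.Walk u v → ℤ
  | _, _, .nil => 1
  | _, _, .cons (u := a) (v := b) _ p => Γ.sign a b * walkSign Γ p

/-- A signed graph is balanced if every cycle is positive. -/
def Balanced (Γ : SignedGraph V) : Prop :=
  ∀ (u : V) (w : Γ.G.Walk u u), w.IsCycle → Γ.walkSign w = 1

def Unbalanced (Γ : SignedGraph V) : Prop := ¬ Γ.Balanced

/-- `Γ` has a negative cycle of length `k`. -/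
def HasNegCycleOfLength (Γ : SignedGraph V) (k : ℕ) : Prop :=
  ∃ (u : V) (w : Γ.G.Walk u u), w.IsCycle ∧ Γ.walkSign w = -1 ∧ w.length = k

/-- Switching equivalence: same underlying graph and signs related by a switching function. -/
def SwitchingEquivalent (Γ Γ' : SignedGraph V) : Prop :=
  Γ.G = Γ'.G ∧ ∃ s : V → ℤ, (∀ v, s v = 1 ∨ s v = -1) ∧
    ∀ u v, Γ'.sign u v = s u * Γ.sign u v * s v

/-- Switching isomorphism. -/
def SwitchingIsomorphic {V' : Type*} (Γ : SignedGraph V) (Γ' : SignedGraph V') : Prop :=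
  ∃ (e : V ≃ V') (s : V → ℤ), (∀ v, s v = 1 ∨ s v = -1) ∧
    (∀ u v, Γ'.G.Adj (e u) (e v) ↔ Γ.G.Adj u v) ∧
    (∀ u v, Γ'.sign (e u) (e v) = s u * Γ.sign u v * s v)

/-- Build a signed graph from a symmetric sign function with values in `{0, 1, -1}`. -/
def ofSign (s : V → V → ℤ) (hsymm : ∀ u v, s u v = s v u)
    (hloop : ∀ v, s v v = 0)
    (hval : ∀ u v, s u v = 0 ∨ s u v = 1 ∨ s u v = -1) : SignedGraph V where
  G := { Adj := fun u v => s u v ≠ 0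
         symm := ⟨fun u v h => by
           show s v u ≠ 0
           rw [hsymm v u]; exact h⟩
         loopless := ⟨fun v h => h (hloop v)⟩ }
  sign := s
  sign_symm := hsymm
  sign_mem := fun u v h => (hval u v).resolve_left h
  sign_not := fun u v h => not_not.mp h

/-- Build a signed graph on `Fin n` from a sign function on ordered pairs of naturals. -/
def ofMinMaxAux (n : ℕ) (aux : ℕ → ℕ → ℤ) (h0 : ∀ a, aux a a = 0)
    (hval : ∀ a b, aux a b = 0 ∨ aux a b = 1 ∨ aux a b = -1) : SignedGraph (Fin n) :=
  ofSign (fun i j => aux (min i.val j.val) (max i.val j.val))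
    (fun i j => by
      show aux (min i.val j.val) (max i.val j.val) = aux (min j.val i.val) (max j.val i.val)
      rw [min_comm, max_comm])
    (fun i => by
      show aux (min i.val i.val) (max i.val i.val) = 0
      rw [min_self, max_self, h0])
    (fun i j => hval _ _)

def gammaNAux : ℕ → ℕ → ℤ := fun a b =>
  if a = b then 0
  else if a = 0 ∧ b = 1 then -1
  else if a = 0 ∧ b = 2 then 1
  else if a = 1 ∧ b = 3 then 1
  else if 2 ≤ a ∧ a < b ∧ ¬(a = 2 ∧ b = 3) then 1
  else 0

/-- The signed graph `Γₙ`: a copy of `K_{n-2}` (on `{2, …, n-1}`) with the edge `{2,3}`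
removed, together with two new vertices `0, 1` and edges `{0,1}` (negative),
`{0,2}` and `{1,3}` (positive); all other edges positive. -/
def GammaN (n : ℕ) : SignedGraph (Fin n) :=
  ofMinMaxAux n gammaNAux (fun a => by simp [gammaNAux])
    (fun a b => by unfold gammaNAux; split_ifs <;> simp)

def gammaNTauAux (τ : ℕ) : ℕ → ℕ → ℤ := fun a b =>
  if a = b then 0
  else if a = 0 ∧ b = 1 then -1
  else if a = 0 ∧ b = 3 then 1
  else if a = 0 ∧ 4 ≤ b ∧ b ≤ τ + 3 then 1
  else if a = 1 ∧ b = 2 then 1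
  else if a = 2 ∧ τ + 4 ≤ b then 1
  else if a = 3 ∧ 4 ≤ b then 1
  else if 4 ≤ a ∧ a < b then 1
  else 0

/-- The signed graph `Γ_{n,τ}`: here `v₁ = 0`, `v₂ = 1`, `v₃ = 2`, `v₅ = 3`,
`X = {4, …, τ+3}`, `Y = {τ+4, …, n-1}` (with `v₄ = τ+4 ∈ Y`); the edge `{0,1}` is the
unique negative edge. -/
def GammaNTau (n τ : ℕ) : SignedGraph (Fin n) :=
  ofMinMaxAux n (gammaNTauAux τ) (fun a => by simp [gammaNTauAux])
    (fun a b => by unfold gammaNTauAux; split_ifs <;> simp)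

/-- The negation `-Γ` of a signed graph. -/
def neg (Γ : SignedGraph V) : SignedGraph V where
  G := Γ.G
  sign := fun u v => - Γ.sign u v
  sign_symm := fun u v => by
    show -Γ.sign u v = -Γ.sign v u
    rw [Γ.sign_symm]
  sign_mem := fun u v h => by
    show -Γ.sign u v = 1 ∨ -Γ.sign u v = -1
    rcases Γ.sign_mem u v h with h' | h' <;> simp [h']
  sign_not := fun u v h => by
    show -Γ.sign u v = 0
    simp [Γ.sign_not u v h]

/-- The induced signed subgraph on a set of vertices. -/
def induce (Γ : SignedGraph V) (S : Set V) : SignedGraph S where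
  G := { Adj := fun u v => Γ.G.Adj u v
         symm := ⟨fun u v h => Γ.G.symm.symm _ _ h⟩
         loopless := ⟨fun u h => Γ.G.loopless.irrefl _ h⟩ }
  sign := fun u v => Γ.sign u v
  sign_symm := fun u v => Γ.sign_symm u v
  sign_mem := fun u v h => Γ.sign_mem u v h
  sign_not := fun u v h => Γ.sign_not u v h

/-- `S` is a balanced clique of `Γ`: it induces a complete subgraph which is balanced. -/
def IsBalancedClique [DecidableEq V] (Γ : SignedGraph V) (S : Finset V) : Prop :=
  (∀ u ∈ S, ∀ v ∈ S, u ≠ v → Γ.G.Adj u v) ∧ (Γ.induce (S : Set V)).Balanced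

end SignedGraph

/-!
Only the edge `{0, 1}` of `Γₙ` is negative. Wrap `Γₙ` around the line `ℤ` with period `5`:
vertex `1` sits over the residue `0`, then `3`, the clique `{4, …, n-1}`, `2` and `0` over
`1, 2, 3, 4`. Every edge lifts to a step of length at most one, and exactly the lifts of the
negative edge pass from one block `{5k, …, 5k+4}` to the next. Hence a closed walk of sign
`-1` lifts to a path between two distinct points over the same residue, which are at least
`5` apart, so the walk has length at least `5`. The cycle `0, 1, 3, 4, 2` attains `5`.
-/

namespace SignedGraph

variable {V : Type*}

/-- `p v` is the residue mod `m` over which `v` lies, and an edge is negative exactly when its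
lift crosses an odd number of boundaries between the blocks `x / m` of the line. -/
def HasPeriodicLift (Γ : SignedGraph V) (m : ℤ) (p : V → ℤ) : Prop :=
  ∀ a b, Γ.G.Adj a b → ∀ x, x ≡ p a [ZMOD m] →
    ∃ y, y ≡ p b [ZMOD m] ∧ |y - x| ≤ 1 ∧ Γ.sign a b = ((y / m - x / m).negOnePow : ℤ)

theorem unbalanced_of_hasNegCycleOfLength {Γ : SignedGraph V} {k : ℕ}
    (h : Γ.HasNegCycleOfLength k) : Γ.Unbalanced := by
  obtain ⟨u, w, hw, hsign, -⟩ := h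
  intro hbal
  rw [hbal u w hw] at hsign
  exact absurd hsign (by decide)

namespace HasPeriodicLift

variable {Γ : SignedGraph V} {m : ℤ} {p : V → ℤ}

theorem exists_lift_walk (hΓ : Γ.HasPeriodicLift m p) {u v : V} (w : Γ.G.Walk u v) (x : ℤ)
    (hx : x ≡ p u [ZMOD m]) :
    ∃ y, y ≡ p v [ZMOD m] ∧ |y - x| ≤ w.length ∧
      Γ.walkSign w = ((y / m - x / m).negOnePow : ℤ) := by
  induction w generalizing x with
  | nil => exact ⟨x, hx, by simp, by simp [walkSign]⟩
  | cons hab w ih =>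
    obtain ⟨x', hx', hstep, hsign⟩ := hΓ _ _ hab x hx
    obtain ⟨y, hy, hdist, hsign'⟩ := ih x' hx'
    refine ⟨y, hy, ?_, ?_⟩
    · rw [SimpleGraph.Walk.length_cons, Nat.cast_succ]
      calc |y - x| = |(y - x') + (x' - x)| := by ring_nf
        _ ≤ |y - x'| + |x' - x| := abs_add_le _ _
        _ ≤ w.length + 1 := add_le_add hdist hstep
    · rw [walkSign, hsign, hsign', ← Units.val_mul, ← Int.negOnePow_add]
      ring_nf

theorem le_length_of_walkSign_eq_neg_one (hΓ : Γ.HasPeriodicLift m p) {u : V}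
    (w : Γ.G.Walk u u) (hw : Γ.walkSign w = -1) : m ≤ w.length := by
  obtain ⟨y, hy, hdist, hsign⟩ := hΓ.exists_lift_walk w (p u) rfl
  have hne : y - p u ≠ 0 := by
    intro hzero
    rw [sub_eq_zero.mp hzero, sub_self, Int.negOnePow_zero, Units.val_one] at hsign
    omega
  by_contra! hlt
  exact hne (Int.eq_zero_of_abs_lt_dvd hy.symm.dvd (hdist.trans_lt hlt))

theorem not_hasNegCycleOfLength (hΓ : Γ.HasPeriodicLift m p) {k : ℕ} (hk : (k : ℤ) < m) :
    ¬ Γ.HasNegCycleOfLength k := by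
  rintro ⟨u, w, -, hw, rfl⟩
  exact hk.not_ge (hΓ.le_length_of_walkSign_eq_neg_one w hw)

end HasPeriodicLift

section GammaN

variable {n : ℕ}

theorem gammaN_adj_cases {i j : Fin n} (h : (GammaN n).G.Adj i j) :
    i.val ≠ j.val ∧ ((min i.val j.val = 0 ∧ max i.val j.val ≤ 2) ∨
      (min i.val j.val = 1 ∧ max i.val j.val = 3) ∨
      (2 ≤ min i.val j.val ∧ ¬(min i.val j.val = 2 ∧ max i.val j.val = 3))) := by
  change gammaNAux _ _ ≠ 0 at h
  unfold gammaNAux at h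
  split_ifs at h <;> omega

theorem gammaN_sign_eq_neg_one_iff {i j : Fin n} :
    (GammaN n).sign i j = -1 ↔ min i.val j.val = 0 ∧ max i.val j.val = 1 := by
  change gammaNAux _ _ = -1 ↔ _
  unfold gammaNAux
  split_ifs <;> grind

/-- The residue over which a vertex of `Γₙ` lies, listed along the cycle `1, 3, X, 2, 0`
where `X = {4, …, n-1}`. -/
def gammaNResidue (i : Fin n) : ℤ :=
  if i.val = 0 then 4 else if i.val = 1 then 0 else if i.val = 2 then 3 else if i.val = 3 then 1
  else 2

theorem gammaNResidue_cases (i : Fin n) :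
    (i.val = 0 ∧ gammaNResidue i = 4) ∨ (i.val = 1 ∧ gammaNResidue i = 0) ∨
      (i.val = 2 ∧ gammaNResidue i = 3) ∨ (i.val = 3 ∧ gammaNResidue i = 1) ∨
      (4 ≤ i.val ∧ gammaNResidue i = 2) := by
  unfold gammaNResidue
  split_ifs <;> omega

theorem gammaN_hasPeriodicLift : (GammaN n).HasPeriodicLift 5 gammaNResidue := by
  intro a b hab x hx
  have hadj := gammaN_adj_cases hab
  have hsign := (GammaN n).sign_mem a b hab
  have hneg := gammaN_sign_eq_neg_one_iff (i := a) (j := b)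
  have ha := gammaNResidue_cases a
  have hb := gammaNResidue_cases b
  unfold Int.ModEq at hx
  -- step to the nearest point over the residue of `b`
  set y := x + ((gammaNResidue b - gammaNResidue a + 2) % 5 - 2)
  refine ⟨y, by unfold Int.ModEq; omega, by rw [abs_le]; omega, ?_⟩
  have hcross : (y / 5 - x / 5 = 0 ∧ (GammaN n).sign a b = 1) ∨
      (y / 5 - x / 5 = 1 ∧ (GammaN n).sign a b = -1) ∨
      (y / 5 - x / 5 = -1 ∧ (GammaN n).sign a b = -1) := by
    omega
  rcases hcross with ⟨hq, hs⟩ | ⟨hq, hs⟩ | ⟨hq, hs⟩ <;> simp [hq, hs]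

theorem gammaN_adj_mk {a b : ℕ} (ha : a < n) (hb : b < n)
    (h : gammaNAux (min a b) (max a b) ≠ 0) : (GammaN n).G.Adj ⟨a, ha⟩ ⟨b, hb⟩ := h

theorem gammaN_hasNegCycleOfLength_five (hn : 5 ≤ n) : (GammaN n).HasNegCycleOfLength 5 := by
  have h0 : 0 < n := by omega
  have h1 : 1 < n := by omega
  have h2 : 2 < n := by omega
  have h3 : 3 < n := by omega
  have h4 : 4 < n := by omega
  refine ⟨⟨0, h0⟩,
    .cons (gammaN_adj_mk h0 h1 (by decide)) <| .cons (gammaN_adj_mk h1 h3 (by decide)) <|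
    .cons (gammaN_adj_mk h3 h4 (by decide)) <| .cons (gammaN_adj_mk h4 h2 (by decide)) <|
    .cons (gammaN_adj_mk h2 h0 (by decide)) .nil, ?_, rfl, rfl⟩
  simp [SimpleGraph.Walk.isCycle_def, SimpleGraph.Walk.isTrail_def, Fin.ext_iff]

end GammaN

end SignedGraph

open SignedGraph in
/-- For every `n ≥ 5`, the signed graph `Γₙ` is unbalanced, contains no negative
3-cycle and no negative 4-cycle; indeed every negative cycle of `Γₙ` has length at least 5,
and `Γₙ` has a negative cycle of length exactly 5 (so its negative cycles of minimum length
have length 5). -/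
theorem GammaN_unbalanced_C34free (n : ℕ) (hn : 5 ≤ n) :
    (GammaN n).Unbalanced ∧
    ¬ (GammaN n).HasNegCycleOfLength 3 ∧
    ¬ (GammaN n).HasNegCycleOfLength 4 ∧
    (GammaN n).HasNegCycleOfLength 5 ∧
    (∀ (u : Fin n) (w : (GammaN n).G.Walk u u), w.IsCycle → (GammaN n).walkSign w = -1 →
      5 ≤ w.length) := by
  have hfive := gammaN_hasNegCycleOfLength_five hn
  refine ⟨unbalanced_of_hasNegCycleOfLength hfive,
    gammaN_hasPeriodicLift.not_hasNegCycleOfLength (by norm_num),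
    gammaN_hasPeriodicLift.not_hasNegCycleOfLength (by norm_num), hfive, ?_⟩
  intro u w _ hw
  exact_mod_cast gammaN_hasPeriodicLift.le_length_of_walkSign_eq_neg_one w hw
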